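/- Let d_1 ≤ d_2 ≤ ... ≤ d_K be real numbers and let K' be a natural number with 2K' < K. For any T ≤ K', among all sequences e_1 ≤ e_2 ≤ ... ≤ e_K obtained by changing at most T of the values d_i (and re-sorting), the minimum possible value of the trimmed mean (∑_{i=K'+1}^{K-K'} e_i)/(K-2K') equals (∑_{i=K'+1-T}^{K-K'-T} d_i)/(K-2K'). -/

import Mathlib

open Finset

noncomputable def tm (K Kp : ℕ) (e : ℕ → ℝ) : ℝ :=
  (∑ i ∈ Finset.Icc (Kp + 1) (K - Kp), e i) / ((K : ℝ) - 2 * Kp)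

noncomputable def sortedOf (E : Multiset ℝ) : ℕ → ℝ :=
  fun i => (E.sort (· ≤ ·)).getD (i - 1) 0

def msOf (K : ℕ) (d : ℕ → ℝ) : Multiset ℝ := (Finset.Icc 1 K).val.map d

noncomputable def Ub (K Kp : ℕ) (d : ℕ → ℝ) (t : ℕ) : ℝ :=
  (∑ i ∈ Finset.Icc (Kp + 1 + t) (K - Kp + t), d i) / ((K : ℝ) - 2 * Kp)

noncomputable def Lb (K Kp : ℕ) (d : ℕ → ℝ) (t : ℕ) : ℝ :=
  (∑ i ∈ Finset.Icc (Kp + 1 - t) (K - Kp - t), d i) / ((K : ℝ) - 2 * Kp)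

/-!
Changing at most `T` values of `d` can push the `(m + T)`-th smallest value below `d m`
only if at least `m + T` values lie below `d m`; but at most `m - 1` of the original values
do, and at most `T` values are new. Hence the `i`-th order statistic of the modified data is
at least `d (i - T)`, which bounds the trimmed mean from below by the shifted window. Replacing
the `T` largest values by `0` attains every one of these bounds at once.
-/

theorem Multiset.card_sub_comm_of_card_eq {α : Type*} [DecidableEq α] {s t : Multiset α}
    (h : card s = card t) : card (s - t) = card (t - s) := by
  have hs := congrArg card (sub_add_inter s t)
  have ht := congrArg card (sub_add_inter t s)
  rw [card_add] at hs ht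
  rw [inter_comm] at ht
  omega

theorem Multiset.countP_le_card_sub_add_countP {α : Type*} [DecidableEq α] (p : α → Prop)
    [DecidablePred p] (s t : Multiset α) : countP p s ≤ card (s - t) + countP p t :=
  calc countP p s ≤ countP p (s - t + t) := countP_le_of_le _ le_tsub_add
    _ = countP p (s - t) + countP p t := countP_add _ _ _
    _ ≤ card (s - t) + countP p t := Nat.add_le_add_right (countP_le_card _ _) _

theorem List.Pairwise.succ_le_countP_lt {α : Type*} [LinearOrder α] {l : List α}
    (hl : l.Pairwise (· ≤ ·)) {j : ℕ} (hj : j < l.length) {c : α} (hc : l[j] < c) :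
    j + 1 ≤ l.countP (· < c) := by
  have htake : ∀ a ∈ l.take (j + 1), a < c := by
    intro a ha
    obtain ⟨k, hk, rfl⟩ := List.mem_take_iff_getElem.mp ha
    exact (hl.rel_get_of_le (a := ⟨k, by omega⟩) (b := ⟨j, hj⟩) (by simp; omega)).trans_lt hc
  calc j + 1 = (l.take (j + 1)).countP (· < c) := by
        rw [List.countP_eq_length.mpr (by simpa using htake), List.length_take]; omega
    _ ≤ l.countP (· < c) := (List.take_sublist _ _).countP_le

theorem sum_Icc_eq_sum_Icc_sub_add (f : ℕ → ℝ) {a b T : ℕ} (ha : T ≤ a) (hb : T ≤ b) :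
    ∑ i ∈ Icc a b, f i = ∑ m ∈ Icc (a - T) (b - T), f (m + T) := by
  conv_lhs => rw [← Nat.sub_add_cancel ha, ← Nat.sub_add_cancel hb, ← Finset.map_add_right_Icc,
    Finset.sum_map]
  rfl

theorem tm_eq_sum_shift (K Kp T : ℕ) (hK : 2 * Kp < K) (hT : T ≤ Kp) (e : ℕ → ℝ) :
    tm K Kp e = (∑ m ∈ Icc (Kp + 1 - T) (K - Kp - T), e (m + T)) / ((K : ℝ) - 2 * Kp) := by
  rw [tm, sum_Icc_eq_sum_Icc_sub_add e (T := T) (by omega) (by omega)]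

theorem msOf_eq_coe (K : ℕ) (d : ℕ → ℝ) : msOf K d = ↑((List.range' 1 K).map d) := by
  simp [msOf, Nat.Icc_eq_range']

theorem card_msOf (K : ℕ) (d : ℕ → ℝ) : Multiset.card (msOf K d) = K := by
  simp [msOf]

theorem msOf_mono (d : ℕ → ℝ) {K L : ℕ} (h : K ≤ L) : msOf K d ≤ msOf L d :=
  Multiset.map_le_map (Finset.val_le_iff.mpr (Finset.Icc_subset_Icc_right h))

theorem countP_lt_msOf_le (K : ℕ) (d : ℕ → ℝ)
    (hmono : ∀ i j, 1 ≤ i → i ≤ j → j ≤ K → d i ≤ d j) {m : ℕ} (hm : 1 ≤ m) :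
    Multiset.countP (· < d m) (msOf K d) ≤ m - 1 := by
  rw [msOf, Multiset.countP_map, ← Finset.filter_val, Finset.card_val]
  calc #((Icc 1 K).filter (fun i => d i < d m)) ≤ #(Icc 1 (m - 1)) := by
        refine Finset.card_le_card fun i hi => ?_
        simp only [Finset.mem_filter, Finset.mem_Icc] at hi ⊢
        by_contra h
        exact (hmono m i hm (by omega) hi.1.2).not_gt hi.2
    _ = m - 1 := by simp

theorem sortedOf_coe {l : List ℝ} (hl : l.Pairwise (· ≤ ·)) (i : ℕ) :
    sortedOf ↑l i = l.getD (i - 1) 0 := by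
  simp only [sortedOf, Multiset.coe_sort, List.mergeSort_eq_self _ hl]

theorem le_sortedOf (K T : ℕ) (d : ℕ → ℝ)
    (hmono : ∀ i j, 1 ≤ i → i ≤ j → j ≤ K → d i ≤ d j) {E : Multiset ℝ}
    (hcard : Multiset.card E = K) (hdiff : Multiset.card (msOf K d - E) ≤ T)
    {m : ℕ} (hm : 1 ≤ m) (hmT : m + T ≤ K) : d m ≤ sortedOf E (m + T) := by
  by_contra! hlt
  have hlen : m + T - 1 < (E.sort (· ≤ ·)).length := by simp [hcard]; omega
  rw [sortedOf, List.getD_eq_getElem _ _ hlen] at hlt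
  have hsorted := (Multiset.pairwise_sort E (· ≤ ·)).succ_le_countP_lt hlen hlt
  rw [← Multiset.coe_countP, Multiset.sort_eq] at hsorted
  have hsymm : Multiset.card (E - msOf K d) ≤ T := by
    rwa [Multiset.card_sub_comm_of_card_eq (by rw [hcard, card_msOf])]
  have := Multiset.countP_le_card_sub_add_countP (· < d m) E (msOf K d)
  have := countP_lt_msOf_le K d hmono hm
  omega

def replaceLargestByZero (K T : ℕ) (d : ℕ → ℝ) : Multiset ℝ :=
  Multiset.replicate T 0 + msOf (K - T) d

theorem card_replaceLargestByZero {K T : ℕ} (hT : T ≤ K) (d : ℕ → ℝ) :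
    Multiset.card (replaceLargestByZero K T d) = K := by
  rw [replaceLargestByZero, Multiset.card_add, Multiset.card_replicate, card_msOf]
  omega

theorem card_msOf_sub_replaceLargestByZero_le (K T : ℕ) (d : ℕ → ℝ) :
    Multiset.card (msOf K d - replaceLargestByZero K T d) ≤ T :=
  calc Multiset.card (msOf K d - replaceLargestByZero K T d)
      ≤ Multiset.card (msOf K d - msOf (K - T) d) :=
        Multiset.card_le_card (tsub_le_tsub_left (Multiset.le_add_left _ _) _)
    _ = T - (T - K) := by
        rw [Multiset.card_sub (msOf_mono d (Nat.sub_le K T)), card_msOf, card_msOf]; omega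
    _ ≤ T := Nat.sub_le _ _

theorem nonneg_of_mem_replaceLargestByZero (K T : ℕ) (d : ℕ → ℝ)
    (hnonneg : ∀ i, 1 ≤ i → i ≤ K → 0 ≤ d i) : ∀ x ∈ replaceLargestByZero K T d, 0 ≤ x := by
  simp only [replaceLargestByZero, msOf, Multiset.mem_add, Multiset.mem_replicate,
    Multiset.mem_map, Finset.mem_val, Finset.mem_Icc]
  rintro x (⟨-, rfl⟩ | ⟨i, hi, rfl⟩)
  · rfl
  · exact hnonneg i hi.1 (by omega)

theorem sortedOf_replaceLargestByZero (K T : ℕ) (d : ℕ → ℝ)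
    (hmono : ∀ i j, 1 ≤ i → i ≤ j → j ≤ K → d i ≤ d j)
    (hnonneg : ∀ i, 1 ≤ i → i ≤ K → 0 ≤ d i) {m : ℕ} (hm : 1 ≤ m) (hmK : m ≤ K - T) :
    sortedOf (replaceLargestByZero K T d) (m + T) = d m := by
  set l := (List.range' 1 (K - T)).map d
  have hl : l.Pairwise (· ≤ ·) := by
    refine List.pairwise_map.mpr ((List.pairwise_lt_range' 1 one_pos).imp_of_mem ?_)
    intro i j hi hj hij
    rw [List.mem_range'_1] at hi hj
    exact hmono i j hi.1 hij.le (by omega)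
  have hl0 : ∀ x ∈ l, 0 ≤ x := by
    simp only [l, List.mem_map, List.mem_range'_1]
    rintro x ⟨i, hi, rfl⟩
    exact hnonneg i hi.1 (by omega)
  have hsorted : (List.replicate T (0 : ℝ) ++ l).Pairwise (· ≤ ·) := by
    refine List.pairwise_append.mpr ⟨List.pairwise_replicate.mpr (Or.inr le_rfl), hl, ?_⟩
    intro x hx y hy
    rw [List.eq_of_mem_replicate hx]
    exact hl0 y hy
  have hE : replaceLargestByZero K T d = ↑(List.replicate T (0 : ℝ) ++ l) := by
    rw [replaceLargestByZero, msOf_eq_coe, ← Multiset.coe_add, Multiset.coe_replicate]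
  rw [hE, sortedOf_coe hsorted, List.getD_append_right _ _ _ _ (by simp; omega),
    List.length_replicate, List.getD_eq_getElem _ _ (by simp [l]; omega)]
  simp only [l, List.getElem_map, List.getElem_range']
  congr 1
  omega

theorem tm_replaceLargestByZero (K Kp T : ℕ) (hK : 2 * Kp < K) (hT : T ≤ Kp) (d : ℕ → ℝ)
    (hmono : ∀ i j, 1 ≤ i → i ≤ j → j ≤ K → d i ≤ d j)
    (hnonneg : ∀ i, 1 ≤ i → i ≤ K → 0 ≤ d i) :
    tm K Kp (sortedOf (replaceLargestByZero K T d)) = Lb K Kp d T := by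
  rw [tm_eq_sum_shift K Kp T hK hT, Lb]
  congr 1
  refine Finset.sum_congr rfl fun m hm => ?_
  rw [Finset.mem_Icc] at hm
  exact sortedOf_replaceLargestByZero K T d hmono hnonneg (by omega) (by omega)

theorem Lb_le_tm (K Kp T : ℕ) (hK : 2 * Kp < K) (hT : T ≤ Kp) (d : ℕ → ℝ)
    (hmono : ∀ i j, 1 ≤ i → i ≤ j → j ≤ K → d i ≤ d j) {E : Multiset ℝ}
    (hcard : Multiset.card E = K) (hdiff : Multiset.card (msOf K d - E) ≤ T) :
    Lb K Kp d T ≤ tm K Kp (sortedOf E) := by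
  rw [tm_eq_sum_shift K Kp T hK hT, Lb]
  have hpos : (0 : ℝ) < K - 2 * Kp := by
    rw [sub_pos]; exact_mod_cast hK
  refine div_le_div_of_nonneg_right (Finset.sum_le_sum fun m hm => ?_) hpos.le
  rw [Finset.mem_Icc] at hm
  exact le_sortedOf K T d hmono hcard hdiff (by omega) (by omega)

theorem stmt1 (K Kp T : ℕ) (hK : 2 * Kp < K) (hT : T ≤ Kp) (d : ℕ → ℝ)
    (hmono : ∀ i j, 1 ≤ i → i ≤ j → j ≤ K → d i ≤ d j)
    (hnonneg : ∀ i, 1 ≤ i → i ≤ K → 0 ≤ d i) :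
    IsLeast
      {r : ℝ | ∃ E : Multiset ℝ, Multiset.card E = K ∧
        Multiset.card (msOf K d - E) ≤ T ∧ (∀ x ∈ E, (0 : ℝ) ≤ x) ∧
        r = tm K Kp (sortedOf E)}
      ((∑ i ∈ Finset.Icc (Kp + 1 - T) (K - Kp - T), d i) / ((K : ℝ) - 2 * Kp)) := by
  refine ⟨⟨replaceLargestByZero K T d, card_replaceLargestByZero (by omega) d,
    card_msOf_sub_replaceLargestByZero_le K T d,
    nonneg_of_mem_replaceLargestByZero K T d hnonneg,
    (tm_replaceLargestByZero K Kp T hK hT d hmono hnonneg).symm⟩, ?_⟩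
  rintro r ⟨E, hcard, hdiff, -, rfl⟩
  exact Lb_le_tm K Kp T hK hT d hmono hcard hdiff
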